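/- Let f : ℝ^n → ℝ be differentiable and satisfy the Regularity Condition RC(μ,λ) globally with global minimizer x⋆ (so ∇f(x⋆) = 0). Let A ∈ ℝ^{2×2}, B ∈ ℝ^{2×1}, C ∈ ℝ^{1×2}, D ∈ ℝ, and let sequences φ_k ∈ ℝ^{2n}, y_k, u_k ∈ ℝ^n satisfy φ_{k+1} = (A ⊗ I_n)φ_k + (B ⊗ I_n)u_k, y_k = (C ⊗ I_n)φ_k + D u_k, u_k = ∇f(y_k). Let φ⋆ = (x⋆, x⋆) ∈ ℝ^{2n} satisfy (A ⊗ I_n)φ⋆ = φ⋆ and (C ⊗ I_n)φ⋆ = x⋆. Suppose there exist a symmetric positive definite P ∈ ℝ^{2×2} and ρ ∈ (0,1) such that the 3×3 matrix [[AᵀPA − ρ²P, AᵀPB],[BᵀPA, BᵀPB]] + [[C, D],[0_{1×2}, 1]]ᵀ [[−λ, 1],[1, −μ]] [[C, D],[0_{1×2}, 1]] is negative semidefinite. Then for all k ≥ 0, ‖φ_k − φ⋆‖ ≤ √(cond(P)) ρ^k ‖φ_0 − φ⋆‖, where cond(P) denotes the ratio of the largest to the smallest eigenvalue of P. -/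

import Mathlib

/-!
With `eₖ = φₖ - φ⋆`, the fixed-point conditions make the error obey the same linear recursion
driven by `uₖ`, with output `yₖ - x⋆`. Evaluating the quadratic form of the LMI at each of the
`n` blocks `(eₖ, uₖ)` and summing gives `V(eₖ₊₁) ≤ ρ² V(eₖ) + s`, where `V(e) = eᵀ(P ⊗ I)e` and
the supply `s = λ‖yₖ - x⋆‖² - 2⟪uₖ, yₖ - x⋆⟫ + μ‖uₖ‖²` is nonpositive by the regularity condition.
Hence `V(eₖ) ≤ ρ²ᵏ V(e₀)`, and comparing `V` with `‖·‖²` through the extreme eigenvalues of `P`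
gives the bound.
-/

open Matrix InnerProductSpace Kronecker

theorem le_sqrt_div_mul_of_mul_sq_le {a b c x : ℝ} (ha : 0 < a) (hc : 0 ≤ c)
    (h : a * x ^ 2 ≤ b * c ^ 2) : x ≤ √(b / a) * c := by
  rw [← Real.sqrt_sq hc, ← Real.sqrt_mul' _ (sq_nonneg c)]
  refine Real.le_sqrt_of_sq_le ?_
  rw [div_mul_eq_mul_div, le_div_iff₀ ha]
  linarith

namespace Matrix

variable {σ ι R : Type*}

section Eigenvalues

variable [Fintype σ] [DecidableEq σ]

open scoped MatrixOrder

theorem IsHermitian.iInf_eigenvalues_mul_dotProduct_le {P : Matrix σ σ ℝ} (hP : P.IsHermitian)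
    (x : σ → ℝ) : (⨅ i, hP.eigenvalues i) * (x ⬝ᵥ x) ≤ x ⬝ᵥ P *ᵥ x := by
  have hle : algebraMap ℝ (Matrix σ σ ℝ) (⨅ i, hP.eigenvalues i) ≤ P := by
    rw [algebraMap_le_iff_le_spectrum hP.isSelfAdjoint, hP.spectrum_real_eq_range_eigenvalues]
    rintro _ ⟨i, rfl⟩
    exact ciInf_le (Finite.bddBelow_range _) i
  simpa [sub_mulVec, Algebra.algebraMap_eq_smul_one, smul_mulVec, dotProduct_smul] using
    (le_iff.mp hle).dotProduct_mulVec_nonneg x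

theorem IsHermitian.dotProduct_le_iSup_eigenvalues_mul {P : Matrix σ σ ℝ} (hP : P.IsHermitian)
    (x : σ → ℝ) : x ⬝ᵥ P *ᵥ x ≤ (⨆ i, hP.eigenvalues i) * (x ⬝ᵥ x) := by
  have hle : P ≤ algebraMap ℝ (Matrix σ σ ℝ) (⨆ i, hP.eigenvalues i) := by
    rw [le_algebraMap_iff_spectrum_le hP.isSelfAdjoint, hP.spectrum_real_eq_range_eigenvalues]
    rintro _ ⟨i, rfl⟩
    exact le_ciSup (Finite.bddAbove_range _) i
  simpa [sub_mulVec, Algebra.algebraMap_eq_smul_one, smul_mulVec, dotProduct_smul] using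
    (le_iff.mp hle).dotProduct_mulVec_nonneg x

theorem PosDef.iInf_eigenvalues_pos [Nonempty σ] {P : Matrix σ σ ℝ} (hP : P.PosDef) :
    0 < ⨅ i, hP.isHermitian.eigenvalues i := by
  obtain ⟨j, hj⟩ := exists_eq_ciInf_of_finite (f := hP.isHermitian.eigenvalues)
  exact hj ▸ hP.eigenvalues_pos j

end Eigenvalues

def slice (v : σ × ι → R) (i : ι) : σ → R := fun a => v (a, i)

theorem slice_add [Add R] (v w : σ × ι → R) (i : ι) : slice (v + w) i = slice v i + slice w i :=
  rfl

theorem slice_kronecker_one_mulVec {τ : Type*} [Fintype σ] [Fintype ι] [DecidableEq ι]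
    [CommSemiring R] (M : Matrix τ σ R) (v : σ × ι → R) (i : ι) :
    slice ((M ⊗ₖ (1 : Matrix ι ι R)) *ᵥ v) i = M *ᵥ slice v i := by
  ext a
  simp [slice, mulVec, dotProduct, Fintype.sum_prod_type, one_apply]

theorem sum_slice_dotProduct_slice [Fintype σ] [Fintype ι] [CommSemiring R] (v w : σ × ι → R) :
    ∑ i, slice v i ⬝ᵥ slice w i = v ⬝ᵥ w := by
  simp only [slice, dotProduct, Fintype.sum_prod_type]
  exact Finset.sum_comm

end Matrix

variable {σ ι : Type*} [Fintype σ] [Fintype ι]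

def LMIFeasible (A : Matrix σ σ ℝ) (B : Matrix σ (Fin 1) ℝ) (C : Matrix (Fin 1) σ ℝ) (D : ℝ)
    (P : Matrix σ σ ℝ) (ρ lam μ : ℝ) : Prop :=
  (-(fromBlocks (Aᵀ * P * A - ρ ^ 2 • P) (Aᵀ * P * B) (Bᵀ * P * A) (Bᵀ * P * B) +
      (fromBlocks C (D • (1 : Matrix (Fin 1) (Fin 1) ℝ)) 0 (1 : Matrix (Fin 1) (Fin 1) ℝ))ᵀ *
      (fromBlocks (-lam • (1 : Matrix (Fin 1) (Fin 1) ℝ)) (1 : Matrix (Fin 1) (Fin 1) ℝ)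
        (1 : Matrix (Fin 1) (Fin 1) ℝ) (-μ • (1 : Matrix (Fin 1) (Fin 1) ℝ))) *
      (fromBlocks C (D • (1 : Matrix (Fin 1) (Fin 1) ℝ)) 0
        (1 : Matrix (Fin 1) (Fin 1) ℝ)))).PosSemidef

/-- `eᵀ (P ⊗ I) e`, computed block by block. -/
def lyapunov (P : Matrix σ σ ℝ) (e : σ × ι → ℝ) : ℝ :=
  ∑ i, slice e i ⬝ᵥ P *ᵥ slice e i

theorem iInf_eigenvalues_mul_norm_sq_le_lyapunov [DecidableEq σ] {P : Matrix σ σ ℝ}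
    (hP : P.IsHermitian) (e : EuclideanSpace ℝ (σ × ι)) :
    (⨅ i, hP.eigenvalues i) * ‖e‖ ^ 2 ≤ lyapunov P e := by
  rw [← real_inner_self_eq_norm_sq, EuclideanSpace.inner_eq_star_dotProduct, star_trivial,
    ← sum_slice_dotProduct_slice, Finset.mul_sum]
  exact Finset.sum_le_sum fun i _ => hP.iInf_eigenvalues_mul_dotProduct_le _

theorem lyapunov_le_iSup_eigenvalues_mul_norm_sq [DecidableEq σ] {P : Matrix σ σ ℝ}
    (hP : P.IsHermitian) (e : EuclideanSpace ℝ (σ × ι)) :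
    lyapunov P e ≤ (⨆ i, hP.eigenvalues i) * ‖e‖ ^ 2 := by
  rw [← real_inner_self_eq_norm_sq, EuclideanSpace.inner_eq_star_dotProduct, star_trivial,
    ← sum_slice_dotProduct_slice, Finset.mul_sum]
  exact Finset.sum_le_sum fun i _ => hP.dotProduct_le_iSup_eigenvalues_mul _

namespace LMIFeasible

variable {A : Matrix σ σ ℝ} {B : Matrix σ (Fin 1) ℝ} {C : Matrix (Fin 1) σ ℝ} {D : ℝ}
  {P : Matrix σ σ ℝ} {ρ lam μ : ℝ}

theorem quadForm_le (h : LMIFeasible A B C D P ρ lam μ) (x : σ → ℝ) (v : ℝ) :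
    let z := (C *ᵥ x) 0 + D * v
    (A *ᵥ x + B *ᵥ fun _ => v) ⬝ᵥ P *ᵥ (A *ᵥ x + B *ᵥ fun _ => v) ≤
      ρ ^ 2 * (x ⬝ᵥ P *ᵥ x) + (lam * z ^ 2 - 2 * (v * z) + μ * v ^ 2) := by
  intro z
  have hFin1 : ∀ a b : Fin 1 → ℝ, a ⬝ᵥ b = a 0 * b 0 := fun a b => by simp [dotProduct]
  have := h.dotProduct_mulVec_nonneg (Sum.elim x fun _ => v)
  simp only [star_trivial, neg_mulVec, add_mulVec, dotProduct_neg, dotProduct_add,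
    dotProduct_mulVec _ (_ᵀ), vecMul_transpose, fromBlocks_mulVec, dotProduct_block,
    Sum.elim_comp_inl, Sum.elim_comp_inr, sub_mulVec, smul_mulVec, ← mulVec_mulVec, mulVec_add,
    mulVec_smul, dotProduct_sub, dotProduct_smul] at this
  simp only [one_mulVec, zero_mulVec, zero_add, hFin1, Pi.add_apply, Pi.zero_apply, Pi.smul_apply,
    smul_eq_mul] at this
  simp only [mulVec_add, dotProduct_add, add_dotProduct, z]
  linear_combination this

theorem lyapunov_step [DecidableEq ι] (h : LMIFeasible A B C D P ρ lam μ) (e : σ × ι → ℝ)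
    (w z : EuclideanSpace ℝ ι) (hz : ∀ i, z i = (C *ᵥ slice e i) 0 + D * w i)
    (hsupply : ⟪w, z⟫_ℝ ≥ μ / 2 * ‖w‖ ^ 2 + lam / 2 * ‖z‖ ^ 2) :
    lyapunov P ((A ⊗ₖ (1 : Matrix ι ι ℝ)) *ᵥ e + (B ⊗ₖ (1 : Matrix ι ι ℝ)) *ᵥ fun p => w p.2) ≤
      ρ ^ 2 * lyapunov P e := by
  have hblock : ∀ i, slice ((A ⊗ₖ (1 : Matrix ι ι ℝ)) *ᵥ e +
      (B ⊗ₖ (1 : Matrix ι ι ℝ)) *ᵥ fun p => w p.2) i = A *ᵥ slice e i + B *ᵥ fun _ => w i :=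
    fun i => by
      rw [slice_add, slice_kronecker_one_mulVec, slice_kronecker_one_mulVec]
      rfl
  have hsum : ∑ i, (lam * z i ^ 2 - 2 * (w i * z i) + μ * w i ^ 2) ≤ 0 := by
    simp only [Finset.sum_add_distrib, Finset.sum_sub_distrib, ← Finset.mul_sum]
    rw [← real_inner_comm w z] at hsupply
    simp only [EuclideanSpace.real_norm_sq_eq, PiLp.inner_apply, RCLike.inner_apply, conj_trivial]
      at hsupply
    linarith
  calc lyapunov P _ ≤ ∑ i, (ρ ^ 2 * (slice e i ⬝ᵥ P *ᵥ slice e i) +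
        (lam * z i ^ 2 - 2 * (w i * z i) + μ * w i ^ 2)) := by
        refine Finset.sum_le_sum fun i _ => ?_
        rw [hblock, hz]
        exact h.quadForm_le (slice e i) (w i)
    _ ≤ ρ ^ 2 * lyapunov P e := by
        rw [Finset.sum_add_distrib, ← Finset.mul_sum]
        exact add_le_of_le_of_nonpos le_rfl hsum

end LMIFeasible

theorem agd_linear_convergence_of_LMI {n : ℕ}
    (f : EuclideanSpace ℝ (Fin n) → ℝ)
    (μ lam : ℝ)
    (xs : EuclideanSpace ℝ (Fin n))
    (hRC : ∀ z : EuclideanSpace ℝ (Fin n),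
      ⟪gradient f z, z - xs⟫_ℝ ≥ μ / 2 * ‖gradient f z‖ ^ 2 + lam / 2 * ‖z - xs‖ ^ 2)
    (A : Matrix (Fin 2) (Fin 2) ℝ) (B : Matrix (Fin 2) (Fin 1) ℝ)
    (C : Matrix (Fin 1) (Fin 2) ℝ) (D : ℝ)
    (φ : ℕ → EuclideanSpace ℝ (Fin 2 × Fin n))
    (y u : ℕ → EuclideanSpace ℝ (Fin n))
    (hstate : ∀ k, φ (k + 1) =
      (A ⊗ₖ (1 : Matrix (Fin n) (Fin n) ℝ)).mulVec (φ k) +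
      (B ⊗ₖ (1 : Matrix (Fin n) (Fin n) ℝ)).mulVec (fun p => u k p.2))
    (hy : ∀ k, y k = fun i =>
      (C ⊗ₖ (1 : Matrix (Fin n) (Fin n) ℝ)).mulVec (φ k) (0, i) + D * u k i)
    (hu : ∀ k, u k = gradient f (y k))
    (φs : EuclideanSpace ℝ (Fin 2 × Fin n))
    (hfixA : (A ⊗ₖ (1 : Matrix (Fin n) (Fin n) ℝ)).mulVec φs = φs)
    (hfixC : ∀ i, (C ⊗ₖ (1 : Matrix (Fin n) (Fin n) ℝ)).mulVec φs (0, i) = xs i)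
    (P : Matrix (Fin 2) (Fin 2) ℝ) (hP : P.IsHermitian) (hPpos : P.PosDef)
    (ρ : ℝ) (hρ : ρ ∈ Set.Ioo (0 : ℝ) 1)
    (hLMI : (-(fromBlocks (Aᵀ * P * A - ρ ^ 2 • P) (Aᵀ * P * B) (Bᵀ * P * A) (Bᵀ * P * B) +
      (fromBlocks C (D • (1 : Matrix (Fin 1) (Fin 1) ℝ)) 0 (1 : Matrix (Fin 1) (Fin 1) ℝ))ᵀ *
      (fromBlocks (-lam • (1 : Matrix (Fin 1) (Fin 1) ℝ)) (1 : Matrix (Fin 1) (Fin 1) ℝ)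
        (1 : Matrix (Fin 1) (Fin 1) ℝ) (-μ • (1 : Matrix (Fin 1) (Fin 1) ℝ))) *
      (fromBlocks C (D • (1 : Matrix (Fin 1) (Fin 1) ℝ)) 0 (1 : Matrix (Fin 1) (Fin 1) ℝ)))).PosSemidef) :
    ∀ k, ‖φ k - φs‖ ≤
      Real.sqrt ((⨆ i, hP.eigenvalues i) / (⨅ i, hP.eigenvalues i)) * ρ ^ k * ‖φ 0 - φs‖ := by
  set e : ℕ → EuclideanSpace ℝ (Fin 2 × Fin n) := fun k => φ k - φs
  have hstep : ∀ k, lyapunov P (e (k + 1)) ≤ ρ ^ 2 * lyapunov P (e k) := by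
    intro k
    have hdyn : ⇑(e (k + 1)) = (A ⊗ₖ (1 : Matrix (Fin n) (Fin n) ℝ)) *ᵥ e k +
        (B ⊗ₖ (1 : Matrix (Fin n) (Fin n) ℝ)) *ᵥ fun p => u k p.2 := by
      simp only [e, WithLp.ofLp_sub, hstate, mulVec_sub, hfixA]
      abel
    have hout : ∀ i, (y k - xs) i = (C *ᵥ slice (e k) i) 0 + D * u k i := by
      intro i
      rw [← slice_kronecker_one_mulVec]
      simp only [slice, e, WithLp.ofLp_sub, Pi.sub_apply, hy k, mulVec_sub, hfixC]
      ring
    rw [hdyn]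
    exact LMIFeasible.lyapunov_step hLMI (e k) (u k) (y k - xs) hout (hu k ▸ hRC (y k))
  intro k
  rw [mul_assoc]
  refine le_sqrt_div_mul_of_mul_sq_le hPpos.iInf_eigenvalues_pos
    (mul_nonneg (pow_nonneg hρ.1.le k) (norm_nonneg _)) ?_
  calc (⨅ i, hP.eigenvalues i) * ‖e k‖ ^ 2 ≤ lyapunov P (e k) :=
        iInf_eigenvalues_mul_norm_sq_le_lyapunov hP (e k)
    _ ≤ (ρ ^ 2) ^ k * lyapunov P (e 0) :=
        le_geom (u := fun k => lyapunov P (e k)) (sq_nonneg ρ) k fun j _ => hstep j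
    _ ≤ (ρ ^ 2) ^ k * ((⨆ i, hP.eigenvalues i) * ‖e 0‖ ^ 2) := by
        gcongr
        exact lyapunov_le_iSup_eigenvalues_mul_norm_sq hP (e 0)
    _ = (⨆ i, hP.eigenvalues i) * (ρ ^ k * ‖e 0‖) ^ 2 := by ring
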